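/- Let (A, ν, μ) be a Gerstenhaber algebra and {νₙ} the L∞-brackets νₙ = μ^{n-1} ⊐ ν (ν₁ = 0, ν₂ = ν). Then on n-fold symmetric tensors the coderivation extending the full family of brackets is proportional to the coderivation extending ν alone: Σ_{i=1}^{n} μ^{n-i+1} ∘ (⊗^{n-i+1} ⊐ νᵢ) = 2^{n-2} · μ^{n-2} ∘ (⊗^{n-1} ⊐ ν) as maps (SⁿA)ₖ → A, for n ≥ 2. -/

import Mathlib

open Finset

noncomputable def unshuffleSign (K : Type) [Field K] {n : ℕ}
    (S : Finset (Fin n)) (d : Fin n → ℤ) : K :=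
  (-1 : K) ^ (∑ p ∈ S, d p * ∑ q ∈ Sᶜ.filter (fun q => q < p), d q)

noncomputable def mprod {K A : Type} [Field K] [AddCommGroup A] [Module K A]
    (μ : A →ₗ[K] A →ₗ[K] A) (x : A) (l : List A) : A :=
  l.foldl (fun u v => μ u v) x

/-- The higher brackets `νₙ = μ^{n-1} ⊐ ν` of a Gerstenhaber algebra (`ν₂ = ν`, `ν_{≤1} = 0`). -/
noncomputable def nuFam {K A : Type} [Field K] [AddCommGroup A] [Module K A]
    (ν μ : A →ₗ[K] A →ₗ[K] A)
    (n : ℕ) (d : Fin n → ℤ) (a : Fin n → A) : A :=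
  ∑ p : Fin n, ∑ q ∈ univ.filter (fun q => p < q),
    ((-1 : K) ^ (d p * (∑ j ∈ univ.filter (fun j => j < p), d j)
      + d q * (∑ j ∈ univ.filter (fun j => j < q ∧ j ≠ p), d j))) •
      mprod μ (ν (a p) (a q))
        (((List.finRange n).filter (fun k => decide (k ≠ p ∧ k ≠ q))).map a)

/-- `μ^{n-i+1} ∘ (⊗^{n-i+1} ⊐ νᵢ)` evaluated on `a₁ ⋯ aₙ ∈ SⁿA`: sum over `(i, n-i)`-unshuffles
with Koszul signs, applying `νᵢ` to the chosen block and multiplying by the remaining factors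
in order. -/
noncomputable def hatNuMul {K A : Type} [Field K] [AddCommGroup A] [Module K A]
    (ν μ : A →ₗ[K] A →ₗ[K] A)
    (n i : ℕ) (d : Fin n → ℤ) (a : Fin n → A) : A :=
  ∑ S : {S : Finset (Fin n) // S.card = i},
    unshuffleSign K S.1 d •
      mprod μ
        (nuFam ν μ i (fun k => d (S.1.orderEmbOfFin S.2 k))
          (fun k => a (S.1.orderEmbOfFin S.2 k)))
        (((List.finRange n).filter (fun k => decide (k ∉ S.1))).map a)

/-!
Expanding `νᵢ` as a signed sum over pairs, each summand of `μ^{n-i+1} ∘ (⊗^{n-i+1} ⊐ νᵢ)` on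
`a₁ ⋯ aₙ` is `ν(a_P, a_Q)` multiplied by the remaining factors in some order. By associativity and
graded commutativity of `μ`, putting those factors back in their original order produces exactly the
Koszul sign that makes the summand independent of the unshuffle `S ⊇ {P, Q}` it came from. Hence the
`i`-th term counts each pair `P < Q` once for every `i`-subset containing it: once for `i = 2`, and
`2^{n-2}` times in total over all `i`.
-/

section mprod
variable {K A : Type} [Field K] [AddCommGroup A] [Module K A] (μ : A →ₗ[K] A →ₗ[K] A)

@[simp] lemma mprod_nil (x : A) : mprod μ x [] = x := rfl

@[simp] lemma mprod_cons (x v : A) (l : List A) : mprod μ x (v :: l) = mprod μ (μ x v) l := rfl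

lemma mprod_append (x : A) (l₁ l₂ : List A) :
    mprod μ x (l₁ ++ l₂) = mprod μ (mprod μ x l₁) l₂ :=
  List.foldl_append

noncomputable def mprodₗ (l : List A) : A →ₗ[K] A where
  toFun x := mprod μ x l
  map_add' x y := by induction l generalizing x y <;> simp_all
  map_smul' c x := by induction l generalizing x <;> simp_all

lemma mprod_smul (c : K) (x : A) (l : List A) : mprod μ (c • x) l = c • mprod μ x l :=
  (mprodₗ μ l).map_smul c x

lemma mprod_sum {ι : Type*} (s : Finset ι) (f : ι → A) (l : List A) :
    mprod μ (∑ t ∈ s, f t) l = ∑ t ∈ s, mprod μ (f t) l :=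
  map_sum (mprodₗ μ l) f s

end mprod

lemma neg_one_zpow_eq_of_even_sub {K : Type} [Field K] {m k : ℤ} (h : Even (m - k)) :
    (-1 : K) ^ m = (-1 : K) ^ k := by
  rw [← sub_add_cancel m k, zpow_add₀ (by norm_num), h.neg_one_zpow, one_mul]

section koszul
variable {ι : Type*} [LinearOrder ι] (d : ι → ℤ)

/-- `(-1) ^ koszulExponent d l` is the Koszul sign of sorting a list of elements of degrees
`d` into increasing order. -/
def koszulExponent : List ι → ℤ
  | [] => 0
  | x :: t => d x * ((t.filter (· < x)).map d).sum + koszulExponent t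

@[simp] lemma koszulExponent_cons (x : ι) (t : List ι) :
    koszulExponent d (x :: t) = d x * ((t.filter (· < x)).map d).sum + koszulExponent d t :=
  rfl

lemma filter_lt_eq_nil_of_sorted {x : ι} {t : List ι} (h : (x :: t).Pairwise (· < ·)) :
    t.filter (· < x) = [] :=
  List.filter_eq_nil_iff.mpr fun _ hz => by simpa using (List.rel_of_pairwise_cons h hz).le

lemma koszulExponent_eq_zero_of_sorted {l : List ι} (h : l.Pairwise (· < ·)) :
    koszulExponent d l = 0 := by
  induction l with
  | nil => rfl
  | cons x t ih => simp [filter_lt_eq_nil_of_sorted h, ih h.of_cons]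

lemma koszulExponent_append_of_sorted {l₁ l₂ : List ι} (h₁ : l₁.Pairwise (· < ·))
    (h₂ : l₂.Pairwise (· < ·)) :
    koszulExponent d (l₁ ++ l₂) = (l₁.map fun x => d x * ((l₂.filter (· < x)).map d).sum).sum := by
  induction l₁ with
  | nil => simp [koszulExponent_eq_zero_of_sorted d h₂]
  | cons x t ih => simp [List.filter_append, filter_lt_eq_nil_of_sorted h₁, ih h₁.of_cons]

variable {K A : Type} [Field K] [AddCommGroup A] [Module K A]
  {𝒜 : ℤ → Submodule K A} {μ : A →ₗ[K] A →ₗ[K] A}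

lemma koszul_smul_mprod_perm (hμassoc : ∀ a b c : A, μ (μ a b) c = μ a (μ b c))
    (hμcomm : ∀ (i j : ℤ) (a b : A), a ∈ 𝒜 i → b ∈ 𝒜 j → μ a b = ((-1 : K) ^ (i * j)) • μ b a)
    {a : ι → A} (ha : ∀ i, a i ∈ 𝒜 (d i)) {l₁ l₂ : List ι} (h : l₁.Perm l₂) (X : A) :
    (-1 : K) ^ koszulExponent d l₁ • mprod μ X (l₁.map a)
      = (-1 : K) ^ koszulExponent d l₂ • mprod μ X (l₂.map a) := by
  induction h generalizing X with
  | nil => rfl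
  | @cons x t₁ t₂ h ih =>
    simp only [koszulExponent_cons, List.map_cons, mprod_cons, ((h.filter _).map d).sum_eq,
      zpow_add₀ (by norm_num : (-1 : K) ≠ 0), mul_smul, ih]
  | swap x y t =>
    rcases eq_or_ne x y with rfl | hne
    · rfl
    have hswap : μ (μ X (a y)) (a x) = (-1 : K) ^ (d x * d y) • μ (μ X (a x)) (a y) := by
      rw [hμassoc, hμassoc, hμcomm _ _ _ _ (ha y) (ha x), map_smul, mul_comm]
    simp only [List.map_cons, mprod_cons, hswap, mprod_smul, smul_smul,
      ← zpow_add₀ (by norm_num : (-1 : K) ≠ 0)]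
    congr 1
    apply neg_one_zpow_eq_of_even_sub
    rcases hne.lt_or_gt with hxy | hxy <;>
      simp only [koszulExponent_cons, List.filter_cons, hxy, hxy.not_gt, decide_true, decide_false,
        Bool.false_eq_true, if_true, if_false, List.map_cons, List.sum_cons]
    exacts [⟨d x * d y, by ring⟩, ⟨0, by ring⟩]
  | trans _ _ ih₁ ih₂ => exact (ih₁ X).trans (ih₂ X)

lemma mprod_map_eq_of_perm_sorted (hμassoc : ∀ a b c : A, μ (μ a b) c = μ a (μ b c))
    (hμcomm : ∀ (i j : ℤ) (a b : A), a ∈ 𝒜 i → b ∈ 𝒜 j → μ a b = ((-1 : K) ^ (i * j)) • μ b a)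
    {a : ι → A} (ha : ∀ i, a i ∈ 𝒜 (d i)) {l l' : List ι} (h : l.Perm l')
    (hl' : l'.Pairwise (· < ·)) (X : A) :
    mprod μ X (l.map a) = (-1 : K) ^ koszulExponent d l • mprod μ X (l'.map a) := by
  have key := koszul_smul_mprod_perm d hμassoc hμcomm ha h X
  rw [koszulExponent_eq_zero_of_sorted d hl', zpow_zero, one_smul] at key
  rw [← key, smul_smul, ← zpow_add₀ (by norm_num : (-1 : K) ≠ 0), ← two_mul, zpow_mul]
  norm_num

end koszul

section orderEmbOfFin
variable {α M : Type*} [LinearOrder α] [AddCommMonoid M] {S : Finset α} {k : ℕ} (hS : S.card = k)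

lemma sum_filter_comp_orderEmbOfFin (p : α → Prop) [DecidablePred p] (f : α → M) :
    ∑ j ∈ univ.filter (fun j => p (S.orderEmbOfFin hS j)), f (S.orderEmbOfFin hS j)
      = ∑ x ∈ S.filter p, f x := by
  conv_rhs => rw [← map_orderEmbOfFin_univ S hS, filter_map, sum_map]
  rfl

lemma sum_pairs_orderEmbOfFin (F : α → α → M) :
    ∑ p : Fin k, ∑ q ∈ univ.filter (p < ·), F (S.orderEmbOfFin hS p) (S.orderEmbOfFin hS q)
      = ∑ P ∈ S, ∑ Q ∈ S.filter (P < ·), F P Q := by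
  have reindex := sum_map univ (S.orderEmbOfFin hS).toEmbedding
    fun P => ∑ Q ∈ S.filter (P < ·), F P Q
  rw [map_orderEmbOfFin_univ] at reindex
  rw [reindex]
  refine sum_congr rfl fun p _ => ?_
  simp_rw [← (S.orderEmbOfFin hS).lt_iff_lt (a := p)]
  exact sum_filter_comp_orderEmbOfFin hS _ _

end orderEmbOfFin

lemma sum_sum_pairs_eq_sum_card_smul {α M : Type*} [Fintype α] [LinearOrder α] [AddCommMonoid M]
    (𝒮 : Finset (Finset α)) (F : α → α → M) :
    ∑ S ∈ 𝒮, ∑ P ∈ S, ∑ Q ∈ S.filter (P < ·), F P Q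
      = ∑ P, ∑ Q ∈ univ.filter (P < ·), #(𝒮.filter (fun S => P ∈ S ∧ Q ∈ S)) • F P Q := by
  calc ∑ S ∈ 𝒮, ∑ P ∈ S, ∑ Q ∈ S.filter (P < ·), F P Q
      = ∑ S ∈ 𝒮, ∑ P, ∑ Q ∈ univ.filter (P < ·), if P ∈ S ∧ Q ∈ S then F P Q else 0 := by
        refine sum_congr rfl fun S _ => ?_
        simp only [ite_and, sum_ite_irrel, sum_const_zero, sum_ite_mem, univ_inter, filter_inter]
    _ = ∑ P, ∑ Q ∈ univ.filter (P < ·), ∑ S ∈ 𝒮, if P ∈ S ∧ Q ∈ S then F P Q else 0 := by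
        rw [sum_comm]
        exact sum_congr rfl fun P _ => sum_comm
    _ = _ := by simp only [← sum_filter, sum_const]

lemma sum_map_filter_finRange {M : Type*} [AddCommMonoid M] {n : ℕ} (p : Fin n → Bool)
    (f : Fin n → M) :
    (((List.finRange n).filter p).map f).sum = ∑ x ∈ univ.filter (fun x => p x), f x := by
  rw [← List.sum_toFinset _ ((List.nodup_finRange n).filter p)]
  simp

lemma unshuffle_exponent_add {α : Type*} [Fintype α] [LinearOrder α] (d : α → ℤ)
    {S : Finset α} {P Q : α} (hP : P ∈ S) (hQ : Q ∈ S) (hPQ : P ≠ Q) :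
    (∑ x ∈ S, d x * ∑ y ∈ Sᶜ.filter (· < x), d y)
        + (d P * ∑ x ∈ S.filter (· < P), d x + d Q * ∑ x ∈ S.filter (fun x => x < Q ∧ x ≠ P), d x)
      = (d P * ∑ x ∈ univ.filter (· < P), d x
          + d Q * ∑ x ∈ univ.filter (fun x => x < Q ∧ x ≠ P), d x)
        + ∑ x ∈ S.filter (fun x => x ≠ P ∧ x ≠ Q), d x * ∑ y ∈ Sᶜ.filter (· < x), d y := by
  have split (p : α → Prop) [DecidablePred p] :
      ∑ x ∈ univ.filter p, d x = ∑ x ∈ S.filter p, d x + ∑ x ∈ Sᶜ.filter p, d x := by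
    simp only [sum_filter, sum_add_sum_compl]
  have hcompl : Sᶜ.filter (fun x => x < Q ∧ x ≠ P) = Sᶜ.filter (· < Q) :=
    filter_congr fun x hx => and_iff_left (ne_of_mem_of_not_mem hP (mem_compl.mp hx)).symm
  have herase : S.filter (fun x => x ≠ P ∧ x ≠ Q) = (S.erase P).erase Q := by
    ext x
    simp only [mem_filter, mem_erase]
    tauto
  rw [split, split, hcompl, herase, ← sum_erase_add S _ hP,
    ← sum_erase_add (S.erase P) _ (mem_erase.mpr ⟨hPQ.symm, hQ⟩)]
  ring

lemma pairwise_lt_filter_finRange (m : ℕ) (r : Fin m → Bool) :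
    ((List.finRange m).filter r).Pairwise (· < ·) :=
  (List.pairwise_lt_finRange m).sublist List.filter_sublist

section unshuffle
variable {n i : ℕ} {S : Finset (Fin n)} (hS : S.card = i) (p q : Fin i)

lemma perm_orderEmbOfFin_append_compl :
    (((List.finRange i).filter (fun k => decide (k ≠ p ∧ k ≠ q))).map (S.orderEmbOfFin hS)
        ++ (List.finRange n).filter (fun k => decide (k ∉ S))).Perm
      ((List.finRange n).filter
        (fun k => decide (k ≠ S.orderEmbOfFin hS p ∧ k ≠ S.orderEmbOfFin hS q))) := by
  set σ := S.orderEmbOfFin hS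
  have hnodup : (((List.finRange i).filter (fun k => decide (k ≠ p ∧ k ≠ q))).map σ
      ++ (List.finRange n).filter (fun k => decide (k ∉ S))).Nodup := by
    refine ((List.nodup_finRange i).filter _ |>.map σ.injective).append
      ((List.nodup_finRange n).filter _) ?_
    simp only [List.disjoint_left, List.mem_map, List.mem_filter, decide_eq_true_eq]
    rintro _ ⟨k, _, rfl⟩ ⟨_, hk⟩
    exact hk (S.orderEmbOfFin_mem hS k)
  refine (List.perm_ext_iff_of_nodup hnodup ((List.nodup_finRange n).filter _)).mpr fun x => ?_
  by_cases hx : x ∈ S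
  · obtain ⟨k, rfl⟩ : x ∈ Set.range σ := by rwa [S.range_orderEmbOfFin hS]
    simp [hx, σ.injective.eq_iff]
  · have hσ (k : Fin i) : σ k ≠ x := fun h => hx (h ▸ S.orderEmbOfFin_mem hS k)
    simp [hx, hσ, (hσ _).symm]

lemma koszulExponent_orderEmbOfFin_append_compl (d : Fin n → ℤ) :
    koszulExponent d (((List.finRange i).filter (fun k => decide (k ≠ p ∧ k ≠ q))).map
        (S.orderEmbOfFin hS) ++ (List.finRange n).filter (fun k => decide (k ∉ S)))
      = ∑ x ∈ S.filter (fun x => x ≠ S.orderEmbOfFin hS p ∧ x ≠ S.orderEmbOfFin hS q),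
          d x * ∑ y ∈ Sᶜ.filter (· < x), d y := by
  set σ := S.orderEmbOfFin hS with hσ
  have hcompl (x : Fin n) : ((((List.finRange n).filter (fun k => decide (k ∉ S))).filter
      (· < x)).map d).sum = ∑ y ∈ Sᶜ.filter (· < x), d y := by
    rw [List.filter_filter, sum_map_filter_finRange]
    congr 1
    ext y
    simp [and_comm]
  have hsorted := (pairwise_lt_filter_finRange i (fun k => decide (k ≠ p ∧ k ≠ q))).map σ
    fun _ _ h => σ.strictMono h
  rw [koszulExponent_append_of_sorted d hsorted (pairwise_lt_filter_finRange n _), List.map_map,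
    sum_map_filter_finRange, ← sum_filter_comp_orderEmbOfFin hS]
  simp only [Function.comp_apply, hcompl, ← hσ, σ.injective.ne_iff, decide_eq_true_eq]

end unshuffle

/-- `± ν(a_p, a_q) a₁ ⋯ âₚ ⋯ â_q ⋯ aₙ`, with its Koszul sign. -/
noncomputable def pairBracketMul {K A : Type} [Field K] [AddCommGroup A] [Module K A]
    (ν μ : A →ₗ[K] A →ₗ[K] A) {n : ℕ} (d : Fin n → ℤ) (a : Fin n → A) (p q : Fin n) : A :=
  ((-1 : K) ^ (d p * (∑ j ∈ univ.filter (fun j => j < p), d j)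
      + d q * (∑ j ∈ univ.filter (fun j => j < q ∧ j ≠ p), d j))) •
    mprod μ (ν (a p) (a q)) (((List.finRange n).filter (fun k => decide (k ≠ p ∧ k ≠ q))).map a)

section pairBracketMul
variable {K A : Type} [Field K] [AddCommGroup A] [Module K A] {𝒜 : ℤ → Submodule K A}
  (μ ν : A →ₗ[K] A →ₗ[K] A) {n : ℕ} (d : Fin n → ℤ) (a : Fin n → A)

lemma nuFam_eq_sum_pairBracketMul :
    nuFam ν μ n d a = ∑ p, ∑ q ∈ univ.filter (p < ·), pairBracketMul ν μ d a p q :=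
  rfl

variable {μ d a}

lemma unshuffleSign_smul_mprod_pairBracketMul (hμassoc : ∀ a b c : A, μ (μ a b) c = μ a (μ b c))
    (hμcomm : ∀ (i j : ℤ) (a b : A), a ∈ 𝒜 i → b ∈ 𝒜 j → μ a b = ((-1 : K) ^ (i * j)) • μ b a)
    (ha : ∀ i, a i ∈ 𝒜 (d i)) {i : ℕ} (S : Finset (Fin n)) (hS : S.card = i) {p q : Fin i}
    (hpq : p < q) :
    unshuffleSign K S d • mprod μ
        (pairBracketMul ν μ (fun k => d (S.orderEmbOfFin hS k)) (fun k => a (S.orderEmbOfFin hS k))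
          p q)
        (((List.finRange n).filter (fun k => decide (k ∉ S))).map a)
      = pairBracketMul ν μ d a (S.orderEmbOfFin hS p) (S.orderEmbOfFin hS q) := by
  set σ := S.orderEmbOfFin hS with hσ
  have hinnerP : ∑ j ∈ univ.filter (· < p), d (σ j) = ∑ x ∈ S.filter (· < σ p), d x := by
    rw [← sum_filter_comp_orderEmbOfFin hS]
    simp only [← hσ, σ.lt_iff_lt]
  have hinnerQ : ∑ j ∈ univ.filter (fun j => j < q ∧ j ≠ p), d (σ j)
      = ∑ x ∈ S.filter (fun x => x < σ q ∧ x ≠ σ p), d x := by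
    rw [← sum_filter_comp_orderEmbOfFin hS]
    simp only [← hσ, σ.lt_iff_lt, σ.injective.ne_iff]
  have hlist : ((List.finRange i).filter (fun k => decide (k ≠ p ∧ k ≠ q))).map (fun k => a (σ k))
      = (((List.finRange i).filter (fun k => decide (k ≠ p ∧ k ≠ q))).map σ).map a :=
    (List.map_map ..).symm
  rw [pairBracketMul, pairBracketMul, mprod_smul, ← mprod_append, hlist, ← List.map_append, mprod_map_eq_of_perm_sorted d hμassoc hμcomm ha
      (perm_orderEmbOfFin_append_compl hS p q) (pairwise_lt_filter_finRange n _),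
    smul_smul, smul_smul, unshuffleSign, ← zpow_add₀ (by norm_num : (-1 : K) ≠ 0),
    ← zpow_add₀ (by norm_num : (-1 : K) ≠ 0)]
  congr 1
  apply neg_one_zpow_eq_of_even_sub
  rw [koszulExponent_orderEmbOfFin_append_compl, hinnerP, hinnerQ]
  have hsplit := unshuffle_exponent_add d (P := σ p) (Q := σ q) (S.orderEmbOfFin_mem hS p)
    (S.orderEmbOfFin_mem hS q) (σ.injective.ne hpq.ne)
  exact ⟨∑ x ∈ S.filter (fun x => x ≠ σ p ∧ x ≠ σ q), d x * ∑ y ∈ Sᶜ.filter (· < x), d y,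
    by linarith⟩

end pairBracketMul

section counting
variable {α : Type*} [Fintype α] [DecidableEq α] {P Q : α}

lemma card_filter_mem_and_mem (h : P ≠ Q) :
    #(univ.filter (fun S : Finset α => P ∈ S ∧ Q ∈ S)) = 2 ^ (Fintype.card α - 2) := by
  have hIcc : univ.filter (fun S : Finset α => P ∈ S ∧ Q ∈ S) = Icc {P, Q} univ := by
    ext S
    simp [insert_subset_iff]
  rw [hIcc, card_Icc_finset (subset_univ _), card_univ, card_pair h]

lemma sum_card_filter_card_eq_mem_and_mem (h : P ≠ Q) :
    ∑ i ∈ Icc 1 (Fintype.card α), #(univ.filter (fun S : Finset α => S.card = i ∧ P ∈ S ∧ Q ∈ S))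
      = 2 ^ (Fintype.card α - 2) := by
  rw [← card_filter_mem_and_mem h, card_eq_sum_card_fiberwise (f := card)
    (t := Icc 1 (Fintype.card α)) fun S hS => ?_]
  · simp only [filter_filter, and_comm]
  · obtain ⟨hP, -⟩ := (mem_filter.mp hS).2
    exact mem_Icc.mpr ⟨card_pos.mpr ⟨P, hP⟩, card_le_univ S⟩

lemma card_filter_card_eq_two_mem_and_mem (h : P ≠ Q) :
    #(univ.filter (fun S : Finset α => S.card = 2 ∧ P ∈ S ∧ Q ∈ S)) = 1 := by
  rw [card_eq_one]
  refine ⟨{P, Q}, ?_⟩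
  ext S
  simp only [mem_filter, mem_univ, true_and, mem_singleton]
  constructor
  · rintro ⟨hcard, hP, hQ⟩
    exact (eq_of_subset_of_card_le (insert_subset_iff.mpr ⟨hP, singleton_subset_iff.mpr hQ⟩)
      (by rw [hcard, card_pair h])).symm
  · rintro rfl
    exact ⟨card_pair h, mem_insert_self P {Q}, mem_insert_of_mem (mem_singleton_self Q)⟩

end counting

section expansion
variable {K A : Type} [Field K] [AddCommGroup A] [Module K A] {𝒜 : ℤ → Submodule K A}
  {μ : A →ₗ[K] A →ₗ[K] A} (ν : A →ₗ[K] A →ₗ[K] A) {n : ℕ} {d : Fin n → ℤ} {a : Fin n → A}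

lemma hatNuMul_eq_sum_card_smul_pairBracketMul (hμassoc : ∀ a b c : A, μ (μ a b) c = μ a (μ b c))
    (hμcomm : ∀ (i j : ℤ) (a b : A), a ∈ 𝒜 i → b ∈ 𝒜 j → μ a b = ((-1 : K) ^ (i * j)) • μ b a)
    (ha : ∀ i, a i ∈ 𝒜 (d i)) (i : ℕ) :
    hatNuMul ν μ n i d a = ∑ P, ∑ Q ∈ univ.filter (P < ·),
      #(univ.filter (fun S : Finset (Fin n) => S.card = i ∧ P ∈ S ∧ Q ∈ S)) •
        pairBracketMul ν μ d a P Q := by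
  calc hatNuMul ν μ n i d a
      = ∑ S : {S : Finset (Fin n) // S.card = i},
          ∑ P ∈ S.1, ∑ Q ∈ S.1.filter (P < ·), pairBracketMul ν μ d a P Q := by
        refine sum_congr rfl fun S _ => ?_
        rw [nuFam_eq_sum_pairBracketMul, mprod_sum, smul_sum, ← sum_pairs_orderEmbOfFin S.2]
        refine sum_congr rfl fun p _ => ?_
        rw [mprod_sum, smul_sum]
        exact sum_congr rfl fun q hq =>
          unshuffleSign_smul_mprod_pairBracketMul ν hμassoc hμcomm ha S.1 S.2 (mem_filter.mp hq).2
    _ = ∑ S ∈ univ.filter (fun S : Finset (Fin n) => S.card = i),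
          ∑ P ∈ S, ∑ Q ∈ S.filter (P < ·), pairBracketMul ν μ d a P Q :=
        (sum_subtype (p := fun S : Finset (Fin n) => S.card = i) _ (by simp)
          fun S => ∑ P ∈ S, ∑ Q ∈ S.filter (P < ·), pairBracketMul ν μ d a P Q).symm
    _ = _ := by
        rw [sum_sum_pairs_eq_sum_card_smul]
        simp only [filter_filter]

end expansion

theorem gerstenhaber_coderivation_comparison_general
    (K : Type) [Field K]
    (A : Type) [AddCommGroup A] [Module K A]
    (𝒜 : ℤ → Submodule K A)
    (μ ν : A →ₗ[K] A →ₗ[K] A)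
    (hμassoc : ∀ a b c : A, μ (μ a b) c = μ a (μ b c))
    (hμcomm : ∀ (i j : ℤ) (a b : A), a ∈ 𝒜 i → b ∈ 𝒜 j →
      μ a b = ((-1 : K) ^ (i * j)) • μ b a) :
    ∀ (n : ℕ), 2 ≤ n → ∀ (d : Fin n → ℤ) (a : Fin n → A), (∀ i, a i ∈ 𝒜 (d i)) →
      ∑ i ∈ Finset.Icc 1 n, hatNuMul ν μ n i d a
        = ((2 : K) ^ (n - 2)) • hatNuMul ν μ n 2 d a := by
  intro n _ d a ha
  simp only [hatNuMul_eq_sum_card_smul_pairBracketMul ν hμassoc hμcomm ha]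
  rw [sum_comm, smul_sum]
  refine sum_congr rfl fun P _ => ?_
  rw [sum_comm, smul_sum]
  refine sum_congr rfl fun Q hQ => ?_
  have hPQ : P ≠ Q := (mem_filter.mp hQ).2.ne
  have hcount := sum_card_filter_card_eq_mem_and_mem hPQ
  rw [Fintype.card_fin] at hcount
  rw [← sum_smul, hcount, card_filter_card_eq_two_mem_and_mem hPQ, one_smul,
    ← Nat.cast_smul_eq_nsmul K, Nat.cast_pow, Nat.cast_ofNat]

/-- **Comparison of the two coderivations** associated to a Gerstenhaber algebra
(`Up to the coalgebra level`): on `SⁿA` (n ≥ 2),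
`Σ_{i=1}^{n} μ^{n-i+1} ∘ (⊗^{n-i+1} ⊐ νᵢ) = 2^{n-2} · μ^{n-2} ∘ (⊗^{n-1} ⊐ ν)`,
i.e. the multiplication composed with the coderivation extending all higher brackets `νᵢ`
equals `2^{n-2}` times the multiplication composed with the coderivation extending `ν` alone. -/
theorem gerstenhaber_coderivation_comparison
    (K : Type) [Field K] [CharZero K]
    (A : Type) [AddCommGroup A] [Module K A]
    (𝒜 : ℤ → Submodule K A)
    (μ ν : A →ₗ[K] A →ₗ[K] A)
    (hμdeg : ∀ (i j : ℤ) (a b : A), a ∈ 𝒜 i → b ∈ 𝒜 j → μ a b ∈ 𝒜 (i + j))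
    (hμassoc : ∀ a b c : A, μ (μ a b) c = μ a (μ b c))
    (hμcomm : ∀ (i j : ℤ) (a b : A), a ∈ 𝒜 i → b ∈ 𝒜 j →
      μ a b = ((-1 : K) ^ (i * j)) • μ b a)
    (hνdeg : ∀ (i j : ℤ) (a b : A), a ∈ 𝒜 i → b ∈ 𝒜 j → ν a b ∈ 𝒜 (i + j - 1))
    (hνsymm : ∀ (i j : ℤ) (a b : A), a ∈ 𝒜 i → b ∈ 𝒜 j →
      ν a b = ((-1 : K) ^ (i * j)) • ν b a)
    (hνjac : ∀ (i j k : ℤ) (a b c : A), a ∈ 𝒜 i → b ∈ 𝒜 j → c ∈ 𝒜 k →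
      ν (ν a b) c + ((-1 : K) ^ (j * k)) • ν (ν a c) b
        + ((-1 : K) ^ (i * (j + k))) • ν (ν b c) a = 0)
    (hLeib : ∀ (i j : ℤ) (a b c : A), a ∈ 𝒜 i → b ∈ 𝒜 j →
      ν a (μ b c) = μ (ν a b) c + ((-1 : K) ^ ((i - 1) * j)) • μ b (ν a c)) :
    ∀ (n : ℕ), 2 ≤ n → ∀ (d : Fin n → ℤ) (a : Fin n → A), (∀ i, a i ∈ 𝒜 (d i)) →
      ∑ i ∈ Finset.Icc 1 n, hatNuMul ν μ n i d a
        = ((2 : K) ^ (n - 2)) • hatNuMul ν μ n 2 d a :=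
  gerstenhaber_coderivation_comparison_general K A 𝒜 μ ν hμassoc hμcomm
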